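/- Let N be a normal σ_i-subgroup of a finite group G. Then N ≤ Z_σ(G) if and only if O^{σ_i}(G) ≤ C_G(N); equivalently, N lies in the σ-hypercentre of G if and only if the quotient G/C_G(N) is a σ_i-group. -/

import Mathlib

open Subgroup Pointwise

/-- A finite group (or any type) is a `π`-group if every prime dividing its
cardinality belongs to `π`. -/
def IsPiGroup (π : Set ℕ) (X : Type*) : Prop :=
  ∀ p : ℕ, p.Prime → p ∣ Nat.card X → p ∈ π

/-- The complementary set of primes `π'`. -/
def primeCompl (π : Set ℕ) : Set ℕ := {p : ℕ | p.Prime ∧ p ∉ π}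

/-- `σ : I → Set ℕ` is a partition of the set of all primes: the `σ i` consist of
primes, and every prime belongs to exactly one `σ i` (so they are pairwise
disjoint and their union is the set of all primes). -/
def IsPrimePartition {I : Type*} (σ : I → Set ℕ) : Prop :=
  (∀ i, ∀ p ∈ σ i, p.Prime) ∧ ∀ p : ℕ, p.Prime → ∃! i, p ∈ σ i

/-- A group is `σ`-primary if it is a `σ i`-group for some `i`. -/
def IsSigmaPrimary {I : Type*} (σ : I → Set ℕ) (X : Type*) : Prop :=
  ∃ i, IsPiGroup (σ i) X

/-- `σ (n)`: the set of indices `i` such that `σ i` contains a prime dividing `n`. -/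
def sigmaOf {I : Type*} (σ : I → Set ℕ) (n : ℕ) : Set I :=
  {i | ∃ p : ℕ, p.Prime ∧ p ∈ σ i ∧ p ∣ n}

/-- `A` is a modular subgroup of `G` (a modular element of the subgroup lattice). -/
def IsModularSubgroup {G : Type*} [Group G] (A : Subgroup G) : Prop :=
  (∀ X Z : Subgroup G, X ≤ Z → X ⊔ (A ⊓ Z) = (X ⊔ A) ⊓ Z) ∧
  (∀ Y Z : Subgroup G, A ≤ Z → A ⊔ (Y ⊓ Z) = (A ⊔ Y) ⊓ Z)

/-- `A` is `σ`-subnormal in `G`: there is a chain `A = A₀ ≤ A₁ ≤ ⋯ ≤ Aₙ = G`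
such that each `A i` is normal in `A (i+1)` or `A (i+1) / (A i)_{A (i+1)}` is
`σ`-primary. -/
def IsSigmaSubnormal {I : Type*} (σ : I → Set ℕ) {G : Type*} [Group G]
    (A : Subgroup G) : Prop :=
  ∃ (n : ℕ) (c : Fin (n + 1) → Subgroup G),
    c 0 = A ∧ c (Fin.last n) = ⊤ ∧
    ∀ i : Fin n,
      c i.castSucc ≤ c i.succ ∧
        (((c i.castSucc).subgroupOf (c i.succ)).Normal ∨
          IsSigmaPrimary σ
            (c i.succ ⧸ ((c i.castSucc).subgroupOf (c i.succ)).normalCore))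

/-- `A` is `σ`-quasinormal in `G` if it is modular and `σ`-subnormal in `G`. -/
def IsSigmaQuasinormal {I : Type*} (σ : I → Set ℕ) {G : Type*} [Group G]
    (A : Subgroup G) : Prop :=
  IsModularSubgroup A ∧ IsSigmaSubnormal σ A

/-- `H` is a Hall `π`-subgroup of `G`: `|H|` is a `π`-number and `[G : H]` has no
prime divisors in `π`. -/
def IsHallPiSubgroup (π : Set ℕ) {G : Type*} [Group G] (H : Subgroup G) : Prop :=
  IsPiGroup π H ∧ ∀ p : ℕ, p.Prime → p ∣ H.index → p ∉ π

/-- Two subgroups permute if `AB = BA` as sets. -/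
def Permutes {G : Type*} [Group G] (A B : Subgroup G) : Prop :=
  (A : Set G) * (B : Set G) = (B : Set G) * (A : Set G)

/-- A group is `σ`-nilpotent if it is a direct product of `σ`-primary groups. -/
def IsSigmaNilpotent {I : Type*} (σ : I → Set ℕ) (X : Type*) [Group X] : Prop :=
  ∃ (n : ℕ) (H : Fin n → GrpCat.{0}),
    (∀ i, Finite (H i)) ∧ (∀ i, IsSigmaPrimary σ (H i)) ∧
      Nonempty (X ≃* ((i : Fin n) → H i))

/-- `C_G(H/K)`: the set of all `g ∈ G` such that `⁅h, g⁆ ∈ K` for all `h ∈ H`,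
realized as the preimage in `G` of the centralizer of the image of `H` in `G ⧸ K`. -/
def quotCentralizer {G : Type*} [Group G] (H K : Subgroup G) (hK : K.Normal) :
    Subgroup G :=
  haveI := hK
  Subgroup.comap (QuotientGroup.mk' K)
    (Subgroup.centralizer ((H.map (QuotientGroup.mk' K) : Subgroup (G ⧸ K)) : Set (G ⧸ K)))

/-- `H/K` is a chief factor of `G`: `K < H` are normal subgroups of `G` with no
normal subgroup of `G` strictly between them. -/
def IsChiefFactor {G : Type*} [Group G] (H K : Subgroup G) : Prop :=
  K.Normal ∧ H.Normal ∧ K < H ∧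
    ∀ L : Subgroup G, L.Normal → K ≤ L → L ≤ H → L = K ∨ L = H

/-- A factor `H/K` (with `K` normal in `G`) is `σ`-central in `G`:
there is an `i` such that both `H/K` and `G/C_G(H/K)` are `σ i`-groups
(equivalently, `(H/K) ⋊ (G/C_G(H/K))` is `σ`-primary). -/
def IsSigmaCentral {I : Type*} (σ : I → Set ℕ) {G : Type*} [Group G]
    (H K : Subgroup G) (hK : K.Normal) : Prop :=
  ∃ i, IsPiGroup (σ i) (H ⧸ K.subgroupOf H) ∧
    IsPiGroup (σ i) (G ⧸ quotCentralizer H K hK)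

/-- A normal subgroup `E` of `G` is `σ`-hypercentral in `G` if either `E = 1` or
every chief factor of `G` below `E` is `σ`-central in `G`. -/
def IsSigmaHypercentral {I : Type*} (σ : I → Set ℕ) {G : Type*} [Group G]
    (E : Subgroup G) : Prop :=
  E.Normal ∧ (E = ⊥ ∨
    ∀ H K : Subgroup G, (hc : IsChiefFactor H K) → H ≤ E →
      IsSigmaCentral σ H K hc.1)

/-- The `σ`-hypercentre `Z_σ(G)`: the product of all `σ`-hypercentral normal
subgroups of `G`. -/
def sigmaHypercentre {I : Type*} (σ : I → Set ℕ) (G : Type*) [Group G] : Subgroup G :=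
  sSup {E : Subgroup G | IsSigmaHypercentral σ E}

/-- `O_π(X)`: the largest normal `π`-subgroup of `X` (the product of all normal
`π`-subgroups). -/
def piCore (π : Set ℕ) (X : Type*) [Group X] : Subgroup X :=
  sSup {N : Subgroup X | N.Normal ∧ IsPiGroup π N}

/-- `O^π(X)`: the smallest normal subgroup of `X` whose quotient is a `π`-group. -/
def piResidual (π : Set ℕ) (X : Type*) [Group X] : Subgroup X :=
  sInf {N : Subgroup X | N.Normal ∧ IsPiGroup π (X ⧸ N)}

/-- A family of subgroups forms an internal direct product decomposition of `X`. -/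
def IsInternalDirectProduct {X : Type*} [Group X] {ι : Type*}
    (N : ι → Subgroup X) : Prop :=
  (∀ i, (N i).Normal) ∧ iSupIndep N ∧ iSup N = ⊤

/-- `X` is `π`-decomposable: `X = O_π(X) × O_{π'}(X)` (internal direct product). -/
def IsPiDecomposable (π : Set ℕ) (X : Type*) [Group X] : Prop :=
  (piCore π X).Normal ∧ (piCore (primeCompl π) X).Normal ∧
    Disjoint (piCore π X) (piCore (primeCompl π) X) ∧
      piCore π X ⊔ piCore (primeCompl π) X = ⊤

/-- `X` is `π`-special for a finite set of primes `π = {p₁, …, pₙ}`: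
`X = O_{p₁}(X) × ⋯ × O_{pₙ}(X) × O_{π'}(X)` (internal direct product). -/
def IsPiSpecial (π : Finset ℕ) (X : Type*) [Group X] : Prop :=
  IsInternalDirectProduct (fun o : Option {p : ℕ // p ∈ π} =>
    o.elim (piCore (primeCompl ↑π) X) (fun p => piCore {(p : ℕ)} X))

/-- The chain condition of Corollary 1.3: each factor is normal or the
corresponding quotient is a `π₀`-group for some `π₀ ∈ {π, π'}`. -/
def IsPiPiPrimeSubnormal (π : Set ℕ) {G : Type*} [Group G] (A : Subgroup G) : Prop :=
  ∃ (n : ℕ) (c : Fin (n + 1) → Subgroup G),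
    c 0 = A ∧ c (Fin.last n) = ⊤ ∧
    ∀ i : Fin n,
      c i.castSucc ≤ c i.succ ∧
        (((c i.castSucc).subgroupOf (c i.succ)).Normal ∨
          ∃ π₀ ∈ ({π, primeCompl π} : Set (Set ℕ)),
            IsPiGroup π₀
              (c i.succ ⧸ ((c i.castSucc).subgroupOf (c i.succ)).normalCore))

/-- The chain condition of Corollary 1.4: each factor is normal or the
corresponding quotient is a `π'`-group. -/
def IsPiPrimeSubnormal (π : Set ℕ) {G : Type*} [Group G] (A : Subgroup G) : Prop :=
  ∃ (n : ℕ) (c : Fin (n + 1) → Subgroup G),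
    c 0 = A ∧ c (Fin.last n) = ⊤ ∧
    ∀ i : Fin n,
      c i.castSucc ≤ c i.succ ∧
        (((c i.castSucc).subgroupOf (c i.succ)).Normal ∨
          IsPiGroup (primeCompl π)
            (c i.succ ⧸ ((c i.castSucc).subgroupOf (c i.succ)).normalCore))

/-- The centralizer of (the carrier of) a normal subgroup is normal. -/
theorem centralizer_normal_of_normal {G : Type*} [Group G] {N : Subgroup G}
    (hN : N.Normal) : (Subgroup.centralizer (N : Set G)).Normal := by
  constructor
  intro g hg c
  rw [Subgroup.mem_centralizer_iff] at hg ⊢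
  intro s hs
  have hs' : c⁻¹ * s * c ∈ (N : Set G) := hN.conj_mem' s hs c
  have h := hg _ hs'
  have : c * ((c⁻¹ * s * c) * g) * c⁻¹ = c * (g * (c⁻¹ * s * c)) * c⁻¹ := by rw [h]
  calc s * (c * g * c⁻¹) = c * ((c⁻¹ * s * c) * g) * c⁻¹ := by group
    _ = c * (g * (c⁻¹ * s * c)) * c⁻¹ := this
    _ = (c * g * c⁻¹) * s := by group

/-- `C_G(H/K)` is normal in `G` whenever `H` and `K` are. -/
theorem quotCentralizer_normal {G : Type*} [Group G] {H K : Subgroup G}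
    (hK : K.Normal) (hH : H.Normal) : (quotCentralizer H K hK).Normal := by
  haveI := hK
  exact (centralizer_normal_of_normal
    (hH.map (QuotientGroup.mk' K) (QuotientGroup.mk'_surjective K))).comap _

/-!
If `G/C_G(N)` is a `σ i`-group, then so is `G/C_G(H/K)` for every chief factor `H/K` below `N`,
because `C_G(N) ≤ C_G(H/K)`; hence `N` is `σ`-hypercentral.

Conversely, a chief factor `H/K` below a product `B ⊔ E` with `K ≤ B`, `H ≰ B` is
`G`-isomorphic (same order, same centralizer) to the chief factor `T/(T ⊓ B)` below `E`, where
`T = E ⊓ (B ⊔ H)`: both are perspective to `(B ⊔ H)/B` by Dedekind's law. So every chief factor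
below `Z_σ(G)` is `σ`-central, and since `N` is a `σ i`-group, `G/C_G(H/K)` is a `σ i`-group for
the chief factors below `N`. If `gC_G(N)` had prime order `p ∉ σ i`, a suitable power `x` of `g`
would act trivially on all these chief factors while `x ^ p` centralizes `N`; as `p` is coprime
to `|N|`, `x` then centralizes `N` itself, which is absurd.
-/

section PiGroup

variable {π : Set ℕ}

theorem IsPiGroup.of_card_dvd {X Y : Type*} (hX : IsPiGroup π X) (h : Nat.card Y ∣ Nat.card X) :
    IsPiGroup π Y :=
  fun p hp hpY => hX p hp (hpY.trans h)

theorem IsPiGroup.quotient_subgroupOf {G : Type*} [Group G] {N H : Subgroup G}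
    (hN : IsPiGroup π N) (hHN : H ≤ N) (K : Subgroup G) : IsPiGroup π (H ⧸ K.subgroupOf H) :=
  hN.of_card_dvd ((K.subgroupOf H).index_dvd_card.trans (card_dvd_of_le hHN))

theorem isPiGroup_iff_pow_prime_eq_one {X : Type*} [Group X] [Finite X] :
    IsPiGroup π X ↔ ∀ p, p.Prime → p ∉ π → ∀ x : X, x ^ p = 1 → x = 1 := by
  constructor
  · intro hX p hp hpπ x hx
    rcases hp.eq_one_or_self_of_dvd _ (orderOf_dvd_of_pow_eq_one hx) with h | h
    · exact orderOf_eq_one_iff.mp h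
    · exact absurd (hX p hp (h ▸ orderOf_dvd_natCard x)) hpπ
  · intro h p hp hpX
    by_contra hpπ
    have := Fact.mk hp
    obtain ⟨x, hx⟩ := exists_prime_orderOf_dvd_card' p hpX
    have hx1 : x = 1 := h p hp hpπ x (hx ▸ pow_orderOf_eq_one x)
    exact hp.ne_one (hx ▸ orderOf_eq_one_iff.mpr hx1)

variable {G : Type*} [Group G]

theorem sInf_normal {T : Set (Subgroup G)} (hT : ∀ Q ∈ T, Q.Normal) : (sInf T).Normal :=
  sInf_eq_iInf' T ▸ normal_iInf_normal fun Q => hT Q Q.2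

variable [Finite G]

theorem isPiGroup_quotient_iff {Q : Subgroup G} [Q.Normal] :
    IsPiGroup π (G ⧸ Q) ↔
      ∀ p, p.Prime → p ∉ π → ∀ g : G, g ^ p ∈ Q → g ∈ Q := by
  simp only [isPiGroup_iff_pow_prime_eq_one, QuotientGroup.forall_mk, ← QuotientGroup.mk_pow,
    QuotientGroup.eq_one_iff]

theorem isPiGroup_quotient_sInf {T : Set (Subgroup G)}
    (hT : ∀ Q ∈ T, Q.Normal ∧ IsPiGroup π (G ⧸ Q)) : IsPiGroup π (G ⧸ sInf T) := by
  have := sInf_normal fun Q hQ => (hT Q hQ).1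
  refine isPiGroup_quotient_iff.2 fun p hp hpπ g hg => mem_sInf.2 fun Q hQ => ?_
  have := (hT Q hQ).1
  exact isPiGroup_quotient_iff.1 (hT Q hQ).2 p hp hpπ g (mem_sInf.1 hg Q hQ)

theorem piResidual_le_iff {C : Subgroup G} (hC : C.Normal) :
    piResidual π G ≤ C ↔ IsPiGroup π (G ⧸ C) :=
  ⟨fun h => (isPiGroup_quotient_sInf fun _ hQ => hQ).of_card_dvd (index_dvd_of_le h),
    fun h => sInf_le ⟨hC, h⟩⟩

end PiGroup

section Centralizers

variable {G : Type*} [Group G]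

theorem mem_quotCentralizer_iff {H K : Subgroup G} (hK : K.Normal) {g : G} :
    g ∈ quotCentralizer H K hK ↔ ∀ h ∈ H, h⁻¹ * g⁻¹ * h * g ∈ K := by
  simp only [quotCentralizer, mem_comap, mem_centralizer_iff, coe_map, Set.forall_mem_image,
    SetLike.mem_coe, QuotientGroup.mk'_apply, ← QuotientGroup.mk_mul]
  refine forall₂_congr fun h _ => ?_
  rw [eq_comm, QuotientGroup.eq, mul_inv_rev, ← mul_assoc]

theorem centralizer_le_quotCentralizer {H K : Subgroup G} (hK : K.Normal) :
    centralizer (H : Set G) ≤ quotCentralizer H K hK := by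
  intro g hg
  rw [mem_quotCentralizer_iff]
  intro h hh
  rw [mul_assoc, mem_centralizer_iff.1 hg h hh]
  simp

theorem sup_inf_assoc_of_le_of_normal {A B C : Subgroup G} [B.Normal] (h : A ≤ C) :
    (A ⊔ B) ⊓ C = A ⊔ B ⊓ C := by
  refine le_antisymm (fun x hx => ?_)
    (sup_le (le_inf le_sup_left h) (inf_le_inf_right C le_sup_right))
  have : x ∈ (A : Set G) * ↑(B ⊓ C) := by
    rw [mul_inf_assoc A B C h, ← mul_normal]
    exact hx
  obtain ⟨a, ha, b, hb, rfl⟩ := this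
  exact mul_mem (mem_sup_left ha) (mem_sup_right hb)

end Centralizers

section Perspectivity

variable {G : Type*} [Group G] {H K B : Subgroup G}

theorem quotCentralizer_eq_sup (hK : K.Normal) [hH : H.Normal] [hB : B.Normal]
    (hHB : H ⊓ B = K) : quotCentralizer H K hK = quotCentralizer (B ⊔ H) B hB := by
  ext g
  simp only [mem_quotCentralizer_iff]
  constructor
  · intro hg y hy
    rw [← SetLike.mem_coe, normal_mul] at hy
    obtain ⟨b, hb, h, hh, rfl⟩ := hy
    have hbg : b⁻¹ * g⁻¹ * b * g ∈ B := by
      simpa only [mul_assoc] using mul_mem (inv_mem hb) (hB.conj_mem' b hb g)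
    have hhg : h⁻¹ * g⁻¹ * h * g ∈ B := (hHB ▸ inf_le_right : K ≤ B) (hg h hh)
    rw [show (b * h)⁻¹ * g⁻¹ * (b * h) * g =
      h⁻¹ * (b⁻¹ * g⁻¹ * b * g) * h * (h⁻¹ * g⁻¹ * h * g) by group]
    exact mul_mem (by simpa only [mul_assoc] using hB.conj_mem' _ hbg h) hhg
  · intro hg h hh
    rw [← hHB]
    refine mem_inf.2 ⟨?_, hg h (mem_sup_right hh)⟩
    simpa only [mul_assoc] using mul_mem (inv_mem hh) (hH.conj_mem' h hh g)

theorem relIndex_eq_sup [B.Normal] (hHB : H ⊓ B = K) : K.relIndex H = B.relIndex (B ⊔ H) := by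
  rw [← hHB, inf_comm, inf_relIndex_right, sup_comm, relIndex_sup_right]

theorem isSigmaCentral_iff_sup {I : Type*} (σ : I → Set ℕ) (hK : K.Normal) [H.Normal]
    [hB : B.Normal] (hHB : H ⊓ B = K) :
    IsSigmaCentral σ H K hK ↔ IsSigmaCentral σ (B ⊔ H) B hB := by
  have hcard : Nat.card (H ⧸ K.subgroupOf H) =
      Nat.card ((B ⊔ H : Subgroup G) ⧸ B.subgroupOf (B ⊔ H)) := relIndex_eq_sup hHB
  simp only [IsSigmaCentral, IsPiGroup, hcard, quotCentralizer_eq_sup hK hHB]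

theorem IsChiefFactor.inf_eq_of_not_le (hc : IsChiefFactor H K) [B.Normal] (hKB : K ≤ B)
    (hHB : ¬H ≤ B) : H ⊓ B = K :=
  have := hc.2.1
  (hc.2.2.2 _ inferInstance (le_inf hc.2.2.1.le hKB) inf_le_left).resolve_right
    fun h => hHB (h ▸ inf_le_right)

theorem IsChiefFactor.inf_isChiefFactor (hc : IsChiefFactor H K) [B.Normal] {T : Subgroup G}
    [hT : T.Normal] (hHB : H ⊓ B = K) (hBT : B ⊔ T = B ⊔ H) : IsChiefFactor T (T ⊓ B) := by
  have := hc.2.1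
  have hKB : K ≤ B := hHB ▸ inf_le_right
  refine ⟨inferInstance, hT, inf_le_left.lt_of_ne fun hTB => ?_, fun L hL hTBL hLT => ?_⟩
  · have hHB' : H ≤ B := le_sup_right.trans (hBT ▸ sup_eq_left.2 (inf_eq_left.1 hTB)).le
    exact hc.2.2.1.not_ge (hHB ▸ le_inf le_rfl hHB')
  have := hL
  have hBL : B ⊔ L ≤ B ⊔ H := hBT ▸ sup_le_sup_left hLT B
  rcases hc.2.2.2 (H ⊓ (B ⊔ L)) inferInstance (le_inf hc.2.2.1.le (hKB.trans le_sup_left))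
    inf_le_left with h | h
  · left
    have hBL' : B ⊔ L = B := by
      rw [← inf_eq_right.2 hBL, sup_inf_assoc_of_le_of_normal le_sup_left, h, sup_eq_left.2 hKB]
    exact le_antisymm (le_inf hLT (sup_eq_left.1 hBL')) hTBL
  · right
    have hBL' : B ⊔ T ≤ B ⊔ L := hBT ▸ sup_le le_sup_left (h ▸ inf_le_right)
    rw [← inf_eq_right.2 (le_sup_right.trans hBL'), sup_comm, sup_inf_assoc_of_le_of_normal hLT,
      inf_comm, sup_eq_left.2 hTBL]

end Perspectivity

section Hypercentre

variable {I : Type*} {σ : I → Set ℕ} {G : Type*} [Group G] {H K : Subgroup G}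

theorem IsChiefFactor.isSigmaCentral_of_le_sup {E B : Subgroup G} (hE : IsSigmaHypercentral σ E)
    [B.Normal] (hc : IsChiefFactor H K) (hKB : K ≤ B) (hHB : ¬H ≤ B) (hle : H ≤ B ⊔ E) :
    IsSigmaCentral σ H K hc.1 := by
  have := hc.2.1
  have := hE.1
  have hHBK := hc.inf_eq_of_not_le hKB hHB
  set T := E ⊓ (B ⊔ H)
  have hBT : B ⊔ T = B ⊔ H := by
    rw [← sup_inf_assoc_of_le_of_normal le_sup_left, inf_eq_right.2 (sup_le le_sup_left hle)]
  have hcT := hc.inf_isChiefFactor hHBK hBT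
  have hE0 : E ≠ ⊥ := by
    rintro rfl
    exact hcT.2.2.1.ne (by simp [T])
  rw [isSigmaCentral_iff_sup σ hc.1 hHBK, ← hBT, ← isSigmaCentral_iff_sup σ hcT.1 rfl]
  exact (hE.2.resolve_left hE0) T (T ⊓ B) hcT inf_le_left

theorem IsChiefFactor.isSigmaCentral_of_le_sup_sSup {S : Set (Subgroup G)} (hS : S.Finite)
    (hSσ : ∀ E ∈ S, IsSigmaHypercentral σ E) (hc : IsChiefFactor H K)
    (hle : H ≤ K ⊔ sSup S) :
    IsSigmaCentral σ H K hc.1 := by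
  induction S, hS using Set.Finite.induction_on generalizing H K with
  | empty => exact absurd (by simpa using hle) hc.2.2.1.not_ge
  | @insert E S _ _ ih =>
    have hSσ' := fun E hE => hSσ E (Set.mem_insert_of_mem _ hE)
    have := hc.1
    have := sSup_normal S fun E hE => (hSσ' E hE).1
    by_cases hHB : H ≤ K ⊔ sSup S
    · exact ih hSσ' hc hHB
    refine hc.isSigmaCentral_of_le_sup (hSσ E (Set.mem_insert _ _)) le_sup_left hHB ?_
    rwa [sSup_insert, ← sup_assoc, sup_right_comm] at hle

theorem IsChiefFactor.isSigmaCentral_of_le_sigmaHypercentre [Finite G] (hc : IsChiefFactor H K)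
    (hH : H ≤ sigmaHypercentre σ G) : IsSigmaCentral σ H K hc.1 :=
  hc.isSigmaCentral_of_le_sup_sSup (Set.toFinite _) (fun _ hE => hE) (hH.trans le_sup_right)

theorem isSigmaHypercentral_of_isPiGroup {i : I} {N : Subgroup G} (hN : N.Normal)
    (hNi : IsPiGroup (σ i) N) (hC : IsPiGroup (σ i) (G ⧸ centralizer (N : Set G))) :
    IsSigmaHypercentral σ N :=
  ⟨hN, .inr fun _ K _ hHN => ⟨i, hNi.quotient_subgroupOf hHN K,
    hC.of_card_dvd <| index_dvd_of_le <|
      (centralizer_le hHN).trans (centralizer_le_quotCentralizer _)⟩⟩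

theorem IsSigmaCentral.isPiGroup_quotCentralizer (hσ : IsPrimePartition σ) {i : I}
    {hK : K.Normal} (hc : IsSigmaCentral σ H K hK) (hKH : K < H)
    (hi : IsPiGroup (σ i) (H ⧸ K.subgroupOf H)) :
    IsPiGroup (σ i) (G ⧸ quotCentralizer H K hK) := by
  obtain ⟨j, hj, hjC⟩ := hc
  have hne : Nat.card (H ⧸ K.subgroupOf H) ≠ 1 := by
    change (K.subgroupOf H).index ≠ 1
    rw [Ne, index_eq_one, subgroupOf_eq_top]
    exact hKH.not_ge
  obtain ⟨p, hp, hpH⟩ := Nat.exists_prime_and_dvd hne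
  obtain rfl : j = i := (hσ.2 p hp).unique (hj p hp hpH) (hi p hp hpH)
  exact hjC

end Hypercentre

section Stability

variable {G : Type*} [Group G]

theorem inv_pow_mul_mul_pow_of_commute {x y c : G} (hxc : Commute x c)
    (h : x⁻¹ * y * x = y * c) (k : ℕ) : (x ^ k)⁻¹ * y * x ^ k = y * c ^ k := by
  induction k with
  | zero => simp
  | succ k ih =>
    calc (x ^ (k + 1))⁻¹ * y * x ^ (k + 1) = x⁻¹ * ((x ^ k)⁻¹ * y * x ^ k) * x := by group
      _ = x⁻¹ * y * x * (x⁻¹ * c ^ k * x) := by rw [ih]; group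
      _ = y * c ^ (k + 1) := by
        rw [h, mul_assoc x⁻¹, ← (hxc.pow_right k).eq, inv_mul_cancel_left, mul_assoc,
          ← pow_succ']

theorem mem_centralizer_of_mem_quotCentralizer {M K : Subgroup G} (hK : K.Normal) {x : G}
    {n : ℕ} (hxK : x ∈ centralizer (K : Set G)) (hxMK : x ∈ quotCentralizer M K hK)
    (hxn : x ^ n ∈ centralizer (M : Set G)) (hn : n.Coprime (Nat.card K)) :
    x ∈ centralizer (M : Set G) := by
  refine mem_centralizer_iff.2 fun y hy => ?_
  set c := y⁻¹ * x⁻¹ * y * x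
  have hcK : c ∈ K := (mem_quotCentralizer_iff hK).1 hxMK y hy
  have hconj : x⁻¹ * y * x = y * c := by simp only [c]; group
  -- Conjugation by `x` multiplies `y` by `c`, which `x` fixes; so `x ^ n` multiplies it by `c ^ n`.
  have hcn : c ^ n = 1 := by
    have := inv_pow_mul_mul_pow_of_commute (mem_centralizer_iff.1 hxK c hcK).symm hconj n
    rw [mul_assoc, mem_centralizer_iff.1 hxn y hy, inv_mul_cancel_left] at this
    simpa using this.symm
  have hc : c = 1 := orderOf_eq_one_iff.1 <|
    (hn.coprime_dvd_left (orderOf_dvd_of_pow_eq_one hcn)).eq_one_of_dvd (K.orderOf_dvd_natCard hcK)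
  rw [hc, mul_one] at hconj
  calc y * x = x * (x⁻¹ * y * x) := by group
    _ = x * y := by rw [hconj]

variable [Finite G]

theorem exists_isChiefFactor {M : Subgroup G} (hM : M.Normal) (hM0 : M ≠ ⊥) :
    ∃ K, IsChiefFactor M K := by
  obtain ⟨K, ⟨hK, hKM⟩, hmax⟩ :=
    Set.Finite.exists_maximalFor id {L : Subgroup G | L.Normal ∧ L < M} (Set.toFinite _)
      ⟨⊥, normal_bot, bot_lt_iff_ne_bot.2 hM0⟩
  refine ⟨K, hK, hM, hKM, fun L hL hKL hLM => ?_⟩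
  rcases hLM.lt_or_eq with h | h
  · exact .inl ((hmax ⟨hL, h⟩ hKL).antisymm hKL)
  · exact .inr h

theorem mem_centralizer_of_forall_mem_quotCentralizer {N : Subgroup G} (hN : N.Normal) {x : G}
    {n : ℕ} (hn : n.Coprime (Nat.card N)) (hxn : x ^ n ∈ centralizer (N : Set G))
    (hx : ∀ H K (hc : IsChiefFactor H K), H ≤ N → x ∈ quotCentralizer H K hc.1) :
    x ∈ centralizer (N : Set G) := by
  suffices ∀ M : Subgroup G, M.Normal → M ≤ N → x ∈ centralizer (M : Set G) from
    this N hN le_rfl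
  intro M
  induction M using WellFoundedLT.induction with
  | _ M ih =>
  intro hM hMN
  rcases eq_or_ne M ⊥ with rfl | hM0
  · simp [mem_centralizer_iff]
  obtain ⟨K, hc⟩ := exists_isChiefFactor hM hM0
  have hKN : K ≤ N := hc.2.2.1.le.trans hMN
  exact mem_centralizer_of_mem_quotCentralizer hc.1 (ih K hc.2.2.1 hc.1 hKN) (hx M K hc hMN)
    (centralizer_le hMN hxn) (hn.coprime_dvd_right (card_dvd_of_le hKN))

theorem isPiGroup_quotient_centralizer {π : Set ℕ} {N : Subgroup G} (hN : N.Normal)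
    (hNπ : IsPiGroup π N) (h : ∀ H K (hc : IsChiefFactor H K), H ≤ N →
      IsPiGroup π (G ⧸ quotCentralizer H K hc.1)) :
    IsPiGroup π (G ⧸ centralizer (N : Set G)) := by
  set T := {Q | ∃ H K, ∃ hc : IsChiefFactor H K, H ≤ N ∧ Q = quotCentralizer H K hc.1}
  have hT : ∀ Q ∈ T, Q.Normal ∧ IsPiGroup π (G ⧸ Q) := by
    rintro _ ⟨H, K, hc, hHN, rfl⟩
    exact ⟨quotCentralizer_normal hc.1 hc.2.1, h H K hc hHN⟩
  have hT' := isPiGroup_quotient_sInf hT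
  have := sInf_normal fun Q hQ => (hT Q hQ).1
  have := centralizer_normal_of_normal hN
  refine isPiGroup_quotient_iff.2 fun p hp hpπ g hgp => ?_
  set m := (sInf T).index
  have hpm : p.Coprime m := hp.coprime_iff_not_dvd.2 fun hpm => hpπ (hT' p hp hpm)
  have hpN : p.Coprime (Nat.card N) := hp.coprime_iff_not_dvd.2 fun hpN => hpπ (hNπ p hp hpN)
  have hgm : g ^ m ∈ centralizer (N : Set G) := by
    refine mem_centralizer_of_forall_mem_quotCentralizer hN hpN ?_ fun H K hc hHN =>
      sInf_le (show _ ∈ T from ⟨H, K, hc, hHN, rfl⟩) ((sInf T).pow_index_mem g)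
    rw [← pow_mul, mul_comm, pow_mul]
    exact pow_mem hgp m
  rw [← QuotientGroup.eq_one_iff] at hgp hgm ⊢
  rw [QuotientGroup.mk_pow] at hgp hgm
  exact (pow_eq_one_iff_of_coprime hpm).1 ⟨hgp, hgm⟩

end Stability

/-- For a normal `σ i`-subgroup `N` of `G`: `N ≤ Z_σ(G)` iff
`O^{σ i}(G) ≤ C_G(N)`, equivalently iff `G/C_G(N)` is a `σ i`-group. -/
theorem normal_sigmaPrimary_le_sigmaHypercentre_iff {I : Type*} (σ : I → Set ℕ)
    (hσ : IsPrimePartition σ) {G : Type*} [Group G] [Finite G] (i : I)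
    (N : Subgroup G) (hN : N.Normal) (hNi : IsPiGroup (σ i) N) :
    (N ≤ sigmaHypercentre σ G ↔
        piResidual (σ i) G ≤ Subgroup.centralizer (N : Set G)) ∧
      (N ≤ sigmaHypercentre σ G ↔
        IsPiGroup (σ i) (G ⧸ Subgroup.centralizer (N : Set G))) := by
  have hcent :
      N ≤ sigmaHypercentre σ G ↔ IsPiGroup (σ i) (G ⧸ centralizer (N : Set G)) := by
    refine ⟨fun hZ => isPiGroup_quotient_centralizer hN hNi fun H K hc hHN => ?_,
      fun hC => le_sSup (isSigmaHypercentral_of_isPiGroup hN hNi hC)⟩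
    have hσc := hc.isSigmaCentral_of_le_sigmaHypercentre (hHN.trans hZ)
    exact hσc.isPiGroup_quotCentralizer hσ hc.2.2.1 (hNi.quotient_subgroupOf hHN K)
  exact ⟨hcent.trans (piResidual_le_iff (centralizer_normal_of_normal hN)).symm, hcent⟩
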